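/- arXiv:2202.04568 — 3 statements merged into one kernel-verified Lean document; each statement's English description precedes it below -/
import Mathlib

section
/- Suppose the generalized-α parameters satisfy γ = 1/2 + α_m − α_f and the temporal mesh is uniform with step Δt > 0. Define for each n the shifted state U_{n+α_f−1/2} := U_n + (α_f − 1/2)Δt U̇_n, where the sequences (U_n) and (U̇_n) satisfy U_{n+1} = U_n + Δt((1−γ)U̇_n + γ U̇_{n+1}) for all n. Then for every n, (1−α_m)U̇_n + α_m U̇_{n+1} = (U_{(n+1)+α_f−1/2} − U_{n+α_f−1/2})/Δt; i.e., the intermediate derivative approximation equals a forward difference of consecutive shifted states. -/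
/-- On a uniform mesh with γ = 1/2 + αm − αf, the generalized-α intermediate
derivative equals a forward difference of consecutive shifted states. -/
theorem genAlpha_shifted_mesh_midpoint
    (m : ℕ) (U dU : ℕ → Fin m → ℝ) (Δt αm αf γ : ℝ)
    (hΔt : 0 < Δt) (hγ : γ = 1/2 + αm - αf)
    (hupd : ∀ n, U (n + 1) = U n + Δt • ((1 - γ) • dU n + γ • dU (n + 1))) :
    ∀ n, (1 - αm) • dU n + αm • dU (n + 1) =
      Δt⁻¹ • ((U (n + 1) + ((αf - 1/2) * Δt) • dU (n + 1)) -
              (U n + ((αf - 1/2) * Δt) • dU n)) := by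
  intro n
  funext i
  have h := congrFun (hupd n) i
  simp only [Pi.add_apply, Pi.sub_apply, Pi.smul_apply, smul_eq_mul] at h ⊢
  field_simp
  rw [h, hγ]
  ring
end

section
/- Let V be a real inner product space, let L : V → ℝ be linear, and suppose sequences (u_n), (u̇_n) in V satisfy u_{n+1} = u_n + Δt((1−γ)u̇_n + γ u̇_{n+1}) with γ = 1/2 + α_m − α_f and Δt > 0, and the balance equation L((1−α_m)u̇_n + α_m u̇_{n+1}) = g_n ∈ ℝ for every n. Define the shifted totals a_n := L(u_n + (α_f−1/2)Δt u̇_n). Then a_{n_end} = a_{n_begin} + Δt·∑_{n=n_begin}^{n_end−1} g_n for all integers 1 ≤ n_begin ≤ n_end. -/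
/-- Abstract conservation property of the second-order generalized-α method:
the shifted totals satisfy a global discrete balance law. -/
theorem genAlpha_abstract_conservation
    (V : Type*) [NormedAddCommGroup V] [InnerProductSpace ℝ V]
    (L : V →ₗ[ℝ] ℝ) (u du : ℕ → V) (g : ℕ → ℝ) (Δt αm αf γ : ℝ)
    (hΔt : 0 < Δt) (hγ : γ = 1/2 + αm - αf)
    (hupd : ∀ n, u (n + 1) = u n + Δt • ((1 - γ) • du n + γ • du (n + 1)))
    (hbal : ∀ n, L ((1 - αm) • du n + αm • du (n + 1)) = g n) :
    ∀ n_begin n_end : ℕ, 1 ≤ n_begin → n_begin ≤ n_end →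
      L (u n_end + ((αf - 1/2) * Δt) • du n_end) =
        L (u n_begin + ((αf - 1/2) * Δt) • du n_begin) +
          Δt * ∑ n ∈ Finset.Ico n_begin n_end, g n := by
  have step : ∀ n, L (u (n+1) + ((αf - 1/2) * Δt) • du (n+1)) =
      L (u n + ((αf - 1/2) * Δt) • du n) + Δt * g n := by
    intro n
    rw [← hbal n, hupd n]
    simp only [map_add, map_smul, smul_eq_mul]
    ring_nf
    rw [hγ]
    ring
  intro n_begin n_end h1 h2
  induction n_end with
  | zero => omega
  | succ m ih =>
    rcases eq_or_lt_of_le h2 with h | h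
    · subst h; simp
    · have hm : n_begin ≤ m := by omega
      rw [Finset.sum_Ico_succ_top hm, step m, ih hm]
      ring
end

section
/- Let (a_n), (b_n) be real sequences and Δt > 0, α_f, α_m, γ ∈ ℝ with γ = 1/2 + α_m − α_f, satisfying a_{n+1} = a_n + Δt((1−γ)b_n + γ b_{n+1}) for all n, and suppose the damped balance (1−α_m)b_n + α_m b_{n+1} = 0 holds for all n (no sources or fluxes). Then the shifted quantity c_n := a_n + (α_f−1/2)Δt b_n is constant in n: c_n = c_1 for all n ≥ 1. -/
/-- Exact conservation without sources or fluxes: the shifted total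
c_n = a_n + (αf − 1/2)Δt b_n is constant. -/
theorem genAlpha_exact_conservation
    (a b : ℕ → ℝ) (Δt αm αf γ : ℝ)
    (hΔt : 0 < Δt) (hγ : γ = 1/2 + αm - αf)
    (hupd : ∀ n, a (n + 1) = a n + Δt * ((1 - γ) * b n + γ * b (n + 1)))
    (hbal : ∀ n, (1 - αm) * b n + αm * b (n + 1) = 0) :
    ∀ n : ℕ, 1 ≤ n → a n + (αf - 1/2) * Δt * b n = a 1 + (αf - 1/2) * Δt * b 1 := by
  intro n hn
  induction n with
  | zero => omega
  | succ m ih =>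
    rcases Nat.eq_or_lt_of_le hn with h | h
    · simp [← h]
    · have hm : 1 ≤ m := by omega
      rw [← ih hm, hupd m]
      have := hbal m
      subst hγ
      nlinarith [this]
end
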